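/- arXiv:0811.3061 — 4 statements merged into one kernel-verified Lean document; each statement's English description precedes it below -/
import Mathlib

section
/- Let G be an abelian group, let S be a subset of G with 0 ∈ S, and let X be a finite subset of G. Then X ⊆ (X^S)^{−S} and (X^S)^{−S} + S = X + S. -/
open scoped Classical Pointwise

section Defs

variable {G : Type*} [AddCommGroup G]

/-- `P` is an arithmetic progression with difference `r`. -/
def IsAP {A : Type*} [AddCommGroup A] (r : A) (P : Finset A) : Prop :=
  ∃ (a : A) (n : ℕ), P.card = n ∧ P = (Finset.range n).image fun i => a + i • r

/-- `P` is an `(r,−j)`–progression: obtained from an `r`-progression by deleting `j` elements. -/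
def IsAPMinus {A : Type*} [AddCommGroup A] (r : A) (j : ℕ) (P : Finset A) : Prop :=
  ∃ Q : Finset A, IsAP r Q ∧ P ⊆ Q ∧ Q.card = P.card + j

/-- A finite set is aperiodic if its only period is `0`. -/
def IsAperiodic (X : Finset G) : Prop :=
  ∀ h : G, X + ({h} : Finset G) = X → h = 0

/-- `A` is `H`-periodic (a union of `H`-cosets): `A + H = A`. -/
def HPeriodic (H : AddSubgroup G) (A : Finset G) : Prop :=
  ∀ a ∈ A, ∀ h ∈ H, a + h ∈ A

/-- `A` is `(H,−j)`-periodic: obtained from an `H`-periodic set by deleting `j` elements. -/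
def HPeriodicMinus (H : AddSubgroup G) (j : ℕ) (A : Finset G) : Prop :=
  ∃ B : Finset G, HPeriodic H B ∧ A ⊆ B ∧ B.card = A.card + j

/-- An `H`-decomposition of `A`: each block is the nonempty intersection of `A`
with some `H`-coset, the blocks are pairwise disjoint and cover `A`. -/
def IsHDecomp (H : AddSubgroup G) (A : Finset G) {m : ℕ} (Ai : Fin m → Finset G) : Prop :=
  (∀ i, (Ai i).Nonempty) ∧
  (∀ i, ∃ g : G, Ai i = A.filter fun x => x - g ∈ H) ∧
  (∀ i j, i ≠ j → Disjoint (Ai i) (Ai j)) ∧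
  A = Finset.univ.biUnion Ai

/-- An `H`-progression with difference `d` (modulo `H`): an `H`-decomposition whose
consecutive blocks lie in consecutive cosets `…, C, C + d, …`. -/
def IsHProg (H : AddSubgroup G) (A : Finset G) {m : ℕ} (Ai : Fin m → Finset G) (d : G) : Prop :=
  IsHDecomp H A Ai ∧
  ∀ (i : ℕ) (hi : i + 1 < m),
    ∀ x ∈ Ai ⟨i, by omega⟩, ∀ y ∈ Ai ⟨i + 1, hi⟩, y - x - d ∈ H

/-- `{S,T}` is an `H`-essential pair. -/
def IsEssentialPair (H : AddSubgroup G) (S T : Finset G) : Prop :=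
  ∃ (u t : ℕ) (Si : Fin (u + 1) → Finset G) (Ti : Fin (t + 1) → Finset G) (d : G),
    IsHProg H S Si d ∧ IsHProg H T Ti d ∧
    ((S : Set G) + (H : Set G)).ncard = S.card + Nat.card H ∧
    ((T : Set G) + (H : Set G)).ncard = T.card + Nat.card H ∧
    ((Nat.card H - 1 = (Si 0).card ∧ (Si 0).card = (Si (Fin.last u)).card ∧
        (Si (Fin.last u)).card = (Ti 0).card ∧ (Ti 0).card = (Ti (Fin.last t)).card ∧
        (Ti (Fin.last t)).card = 1) ∨
      (∃ (_ : 1 ≤ u) (_ : 1 ≤ t),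
        (Si (Fin.last u)).card = 1 ∧ (Ti (Fin.last t)).card = 1 ∧
        (Si ⟨u - 1, by omega⟩).card = Nat.card H - 1 ∧
        (Ti ⟨t - 1, by omega⟩).card = Nat.card H - 1 ∧
        Ti ⟨t - 1, by omega⟩ + Si (Fin.last u) = Ti (Fin.last t) + Si ⟨u - 1, by omega⟩) ∨
      (∃ K0 K1 : AddSubgroup G, Nat.card K0 = 2 ∧ Nat.card K1 = 2 ∧
        K0 ⊔ K1 = H ∧ K0 ⊓ K1 = ⊥ ∧
        (∃ a : G, ↑(Si 0) = a +ᵥ (K0 : Set G)) ∧ (∃ a : G, ↑(Ti 0) = a +ᵥ (K0 : Set G)) ∧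
        (∃ a : G, ↑(Si (Fin.last u)) = a +ᵥ (K1 : Set G)) ∧
        (∃ a : G, ↑(Ti (Fin.last t)) = a +ᵥ (K1 : Set G))))

/-- `{S,T}` is a Klein pair: an `H`-essential pair of type (iii). -/
def IsKleinPair (H : AddSubgroup G) (S T : Finset G) : Prop :=
  ∃ (u t : ℕ) (Si : Fin (u + 1) → Finset G) (Ti : Fin (t + 1) → Finset G) (d : G),
    IsHProg H S Si d ∧ IsHProg H T Ti d ∧
    ((S : Set G) + (H : Set G)).ncard = S.card + Nat.card H ∧
    ((T : Set G) + (H : Set G)).ncard = T.card + Nat.card H ∧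
    (∃ K0 K1 : AddSubgroup G, Nat.card K0 = 2 ∧ Nat.card K1 = 2 ∧
      K0 ⊔ K1 = H ∧ K0 ⊓ K1 = ⊥ ∧
      (∃ a : G, ↑(Si 0) = a +ᵥ (K0 : Set G)) ∧ (∃ a : G, ↑(Ti 0) = a +ᵥ (K0 : Set G)) ∧
      (∃ a : G, ↑(Si (Fin.last u)) = a +ᵥ (K1 : Set G)) ∧
      (∃ a : G, ↑(Ti (Fin.last t)) = a +ᵥ (K1 : Set G)))

/-- `X` is admissible for the `k`-th connectivity of `S` inside the subgroup `L`:
`X ⊆ L`, `|X| ≥ k`, and the complement of `X + S` in `L` has at least `k` elements. -/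
def GoodIn (L : AddSubgroup G) (S : Finset G) (k : ℕ) (X : Finset G) : Prop :=
  ↑X ⊆ (L : Set G) ∧ k ≤ X.card ∧
    ∃ Y : Finset G, ↑Y ⊆ (L : Set G) ∧ k ≤ Y.card ∧ Disjoint Y (X + S)

/-- The `k`-th isoperimetric connectivity of `S`, computed inside the subgroup `L`. -/
noncomputable def kConnIn (L : AddSubgroup G) (S : Finset G) (k : ℕ) : ℕ :=
  if ∃ X, GoodIn L S k X then
    sInf {m | ∃ X, GoodIn L S k X ∧ ((X + S) \ X).card = m}
  else Nat.card L - 2 * k + 1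

/-- `X` is a `k`-fragment of `S` inside the subgroup `L`. -/
def IsFragmentIn (L : AddSubgroup G) (S : Finset G) (k : ℕ) (X : Finset G) : Prop :=
  GoodIn L S k X ∧ ((X + S) \ X).card = kConnIn L S k

/-- The `k`-th isoperimetric connectivity of `S`. -/
noncomputable def kConn (S : Finset G) (k : ℕ) : ℕ := kConnIn ⊤ S k

/-- `X` is a `k`-fragment of `S`. -/
def IsFragment (S : Finset G) (k : ℕ) (X : Finset G) : Prop := IsFragmentIn ⊤ S k X

/-- `A` is a `k`-atom of `S`: a `k`-fragment of minimal cardinality. -/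
def IsKAtom (S : Finset G) (k : ℕ) (A : Finset G) : Prop :=
  IsFragment S k A ∧ ∀ X : Finset G, IsFragment S k X → A.card ≤ X.card

/-- `S` is degenerate: some subgroup is a `2`-fragment of `S`. -/
def Degenerate (S : Finset G) : Prop :=
  ∃ (H : AddSubgroup G) (F : Finset G), ↑F = (H : Set G) ∧ IsFragment S 2 F

/-- `H` is a hyper-atom of `S`: a maximal subgroup which is a `2`-fragment of `S`. -/
def IsHyperAtom (S : Finset G) (H : AddSubgroup G) : Prop :=
  (∃ F : Finset G, ↑F = (H : Set G) ∧ IsFragment S 2 F) ∧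
  ∀ (K : AddSubgroup G) (F : Finset G), ↑F = (K : Set G) → IsFragment S 2 F → H ≤ K → K = H

/-- `H` is a hyper-atom of `S` inside the subgroup `L`. -/
def IsHyperAtomIn (L : AddSubgroup G) (S : Finset G) (H : AddSubgroup G) : Prop :=
  (∃ F : Finset G, ↑F = (H : Set G) ∧ IsFragmentIn L S 2 F) ∧
  ∀ (K : AddSubgroup G) (F : Finset G), ↑F = (K : Set G) → IsFragmentIn L S 2 F → H ≤ K → K = H

/-- `H` is a super-atom of `S`: either `H = ⟨S*⟩` or `H` is a hyper-atom of `S*`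
regarded as a generating subset of `⟨S*⟩`. -/
def IsSuperAtom (S : Finset G) (H : AddSubgroup G) : Prop :=
  ∃ a ∈ S,
    H = AddSubgroup.closure ↑(S.image fun x => x - a) ∨
      IsHyperAtomIn (AddSubgroup.closure ↑(S.image fun x => x - a))
        (S.image fun x => x - a) H

/-- `S` is a Vosper subset: `|X+S| ≥ min (|A|−1, |X|+|S|)` for every `X` with `|X| ≥ 2`. -/
def VosperSubset {A : Type*} [AddCommGroup A] (S : Finset A) : Prop :=
  ∀ X : Finset A, 2 ≤ X.card → min (Nat.card A - 1) (X.card + S.card) ≤ (X + S).card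

/-- `A = A0 ∪ A1` is a quasi-`H`-periodic partition: `A0 + H = A0` and
`A1` is contained in a single `H`-coset. -/
def QuasiHPartition (H : AddSubgroup G) (A A0 A1 : Finset G) : Prop :=
  A = A0 ∪ A1 ∧ Disjoint A0 A1 ∧ HPeriodic H A0 ∧ ∃ g : G, ↑A1 ⊆ g +ᵥ (H : Set G)

end Defs

/-! The maps `A ↦ A + S` and `B ↦ (Bᶜ - S)ᶜ` form a Galois connection on subsets of `G`; both
claims are then the general identities `a ≤ u (l a)` and `l (u (l a)) = l a`. -/

theorem Set.add_subset_iff_subset_compl_sub_compl {G : Type*} [AddGroup G] {A B S : Set G} :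
    A + S ⊆ B ↔ A ⊆ (Bᶜ - S)ᶜ := by
  constructor
  · rintro h a ha ⟨b, hb, s, hs, rfl⟩
    exact hb (h ⟨b - s, ha, s, hs, sub_add_cancel b s⟩)
  · rintro h _ ⟨a, ha, s, hs, rfl⟩
    by_contra hb
    exact h ha ⟨a + s, hb, s, hs, add_sub_cancel_right a s⟩

theorem Set.gc_add_compl_sub_compl {G : Type*} [AddGroup G] (S : Set G) :
    GaloisConnection (· + S) (fun B : Set G => (Bᶜ - S)ᶜ) :=
  fun _ _ => Set.add_subset_iff_subset_compl_sub_compl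

theorem dual_lemma_general {G : Type*} [AddCommGroup G]
    (S : Set G)
    (X : Set G) :
    X ⊆ ((X + S)ᶜ - S)ᶜ ∧ ((X + S)ᶜ - S)ᶜ + S = X + S :=
  ⟨(Set.gc_add_compl_sub_compl S).le_u_l X, (Set.gc_add_compl_sub_compl S).l_u_l_eq_l X⟩

/-- Lemma 2.4: `X ⊆ (X^S)^{−S}` and `(X^S)^{−S} + S = X + S`. -/
theorem dual_lemma {G : Type*} [AddCommGroup G]
    (S : Set G) (h0S : (0 : G) ∈ S)
    (X : Set G) (hX : X.Finite) :
    X ⊆ ((X + S)ᶜ - S)ᶜ ∧ ((X + S)ᶜ - S)ᶜ + S = X + S :=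
  dual_lemma_general S X
end

section
/- Let μ ∈ {0,1} and let S and T be subsets of an abelian group G with |S| = |T| = 3, S+T aperiodic, and |S+T| = 6 − μ. Then there exist r, a ∈ G such that either one of the sets S and T is an r-progression, or T = a + S. -/
open scoped Classical Pointwise

set_option linter.unusedSectionVars false
set_option linter.unreachableTactic false
set_option linter.unusedTactic false
set_option maxHeartbeats 1000000

section Helpers
variable {G : Type*} [AddCommGroup G]

lemma lin {a b c d : G} (h : a = b) (k : c - d = a - b) : c = d := by
  rw [h, sub_self, sub_eq_zero] at k; exact k

lemma lin2 {a b c d e f : G} (h1 : a = b) (h2 : c = d)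
    (k : e - f = (a - b) + (c - d)) : e = f := by
  rw [h1, h2, sub_self, sub_self, add_zero, sub_eq_zero] at k; exact k

lemma triple_congr {a b c a' b' c' : G} (h1 : a = a') (h2 : b = b') (h3 : c = c') :
    ({a, b, c} : Finset G) = {a', b', c'} := by subst h1 h2 h3; rfl

lemma perm_bac (a b c : G) : ({a, b, c} : Finset G) = {b, a, c} := by
  ext g; simp only [Finset.mem_insert, Finset.mem_singleton]; tauto

lemma card_sadd (c : G) (X : Finset G) : (({c} : Finset G) + X).card = X.card := by
  simp [Finset.singleton_add]

lemma singleton_add_triple (c a b e : G) :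
    ({c} : Finset G) + {a, b, e} = {c + a, c + b, c + e} := by
  ext g
  simp only [Finset.mem_add, Finset.mem_insert, Finset.mem_singleton]
  constructor
  · rintro ⟨u, rfl, v, (rfl | rfl | rfl), rfl⟩ <;> tauto
  · rintro (rfl | rfl | rfl)
    exacts [⟨c, rfl, a, by tauto⟩, ⟨c, rfl, b, by tauto⟩, ⟨c, rfl, e, by tauto⟩]

lemma perm_acb (a b c : G) : ({a, b, c} : Finset G) = {a, c, b} := by
  ext g; simp only [Finset.mem_insert, Finset.mem_singleton]; tauto

lemma perm_bca (a b c : G) : ({a, b, c} : Finset G) = {b, c, a} := by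
  ext g; simp only [Finset.mem_insert, Finset.mem_singleton]; tauto

lemma perm_cab (a b c : G) : ({a, b, c} : Finset G) = {c, a, b} := by
  ext g; simp only [Finset.mem_insert, Finset.mem_singleton]; tauto

lemma perm_cba (a b c : G) : ({a, b, c} : Finset G) = {c, b, a} := by
  ext g; simp only [Finset.mem_insert, Finset.mem_singleton]; tauto

lemma zero_sadd (X : Finset G) : ({(0 : G)} : Finset G) + X = X := by
  simp [Finset.singleton_add]

lemma isAP_triple (r a : G) {P : Finset G} (hcard : P.card = 3)
    (hP : P = {a, a + r, a + r + r}) : IsAP r P := by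
  refine ⟨a, 3, hcard, ?_⟩
  have h3 : Finset.range 3 = {0, 1, 2} := by decide
  rw [h3, hP]
  simp only [Finset.image_insert, Finset.image_singleton]
  exact triple_congr (by simp) (by simp) (by rw [show (2:ℕ) • r = r + r from two_smul ..]; abel)

lemma isAP_sadd {r : G} (c : G) {P : Finset G} (h : IsAP r P) : IsAP r (({c} : Finset G) + P) := by
  obtain ⟨a, n, hcard, hP⟩ := h
  refine ⟨c + a, n, by rw [card_sadd, hcard], ?_⟩
  rw [hP]
  ext g
  simp only [Finset.mem_add, Finset.mem_singleton, Finset.mem_image]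
  constructor
  · rintro ⟨u, rfl, v, ⟨i, hi, rfl⟩, rfl⟩; exact ⟨i, hi, by abel⟩
  · rintro ⟨i, hi, rfl⟩; exact ⟨c, rfl, _, ⟨i, hi, rfl⟩, by abel⟩

lemma aperiodic_sadd (c : G) {X : Finset G} (h : IsAperiodic (({c} : Finset G) + X)) :
    IsAperiodic X := fun g hg => h g (by rw [add_assoc, hg])

lemma torsion_core (d a s : G) (h2 : d + d = 0) (hd : d ≠ 0) (h1 : a ≠ s) (h3 : a + d ≠ s)
    (T : Finset G) (hT3 : T.card = 3)
    (hap : IsAperiodic (({a, a + d, s} : Finset G) + T))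
    (hc : (({a, a + d, s} : Finset G) + T).card ≤ 6) :
    ∃ c : G, T = {c} + ({a, a + d, s} : Finset G) := by
  have hdd : ∀ u : G, u + d + d = u := fun u => lin h2 (by abel)
  by_cases hmeet : ∃ b ∈ T, b + d ∈ T
  · obtain ⟨b, hb, hbd⟩ := hmeet
    have hbne : b ≠ b + d := fun h => hd (lin h.symm (by abel))
    have hsub : ({b, b + d} : Finset G) ⊆ T := by
      intro g hg; simp only [Finset.mem_insert, Finset.mem_singleton] at hg
      rcases hg with rfl | rfl <;> assumption
    have hpcard : ({b, b + d} : Finset G).card = 2 := by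
      rw [Finset.card_insert_of_notMem (by simpa using hbne), Finset.card_singleton]
    have hdiffne : (T \ {b, b + d}).Nonempty := by
      rw [← Finset.card_pos, Finset.card_sdiff_of_subset hsub, hpcard, hT3]; norm_num
    obtain ⟨t, ht⟩ := hdiffne
    simp only [Finset.mem_sdiff, Finset.mem_insert, Finset.mem_singleton] at ht
    obtain ⟨htT, htne⟩ := ht
    push_neg at htne
    obtain ⟨htb, htbd⟩ := htne
    have hm1 : b ∉ ({b + d, t} : Finset G) := by
      simp only [Finset.mem_insert, Finset.mem_singleton]
      push_neg; exact ⟨hbne, fun h => htb h.symm⟩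
    have hm2 : b + d ∉ ({t} : Finset G) := by
      simp only [Finset.mem_singleton]; exact fun h => htbd h.symm
    have hTcard : ({b, b + d, t} : Finset G).card = 3 := by
      rw [Finset.card_insert_of_notMem hm1, Finset.card_insert_of_notMem hm2,
        Finset.card_singleton]
    have hTeq : T = {b, b + d, t} := by
      refine (Finset.eq_of_subset_of_card_le ?_ (by rw [hT3, hTcard])).symm
      intro g hg; simp only [Finset.mem_insert, Finset.mem_singleton] at hg
      rcases hg with rfl | rfl | rfl <;> assumption
    have hSig : ({a, a + d, s} : Finset G) + T =
        ({a+b, a+b+d, a+t, a+t+d, s+b, s+b+d} : Finset G) ∪ {s + t} := by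
      rw [hTeq]
      ext g
      simp only [Finset.mem_add, Finset.mem_union, Finset.mem_insert, Finset.mem_singleton]
      constructor
      · rintro ⟨u, (rfl | rfl | rfl), v, (rfl | rfl | rfl), rfl⟩
        · exact Or.inl (Or.inl rfl)
        · exact Or.inl (Or.inr (Or.inl (by abel)))
        · exact Or.inl (Or.inr (Or.inr (Or.inl rfl)))
        · exact Or.inl (Or.inr (Or.inl (by abel)))
        · exact Or.inl (Or.inl (lin h2 (by abel)))
        · exact Or.inl (Or.inr (Or.inr (Or.inr (Or.inl (by abel)))))
        · exact Or.inl (Or.inr (Or.inr (Or.inr (Or.inr (Or.inl rfl)))))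
        · exact Or.inl (Or.inr (Or.inr (Or.inr (Or.inr (Or.inr (by abel))))))
        · exact Or.inr rfl
      · rintro ((rfl | rfl | rfl | rfl | rfl | rfl) | rfl)
        exacts [⟨a, by tauto, b, by tauto, rfl⟩,
          ⟨a, by tauto, b + d, by tauto, by abel⟩,
          ⟨a, by tauto, t, by tauto, rfl⟩,
          ⟨a + d, by tauto, t, by tauto, by abel⟩,
          ⟨s, by tauto, b, by tauto, rfl⟩,
          ⟨s, by tauto, b + d, by tauto, by abel⟩,
          ⟨s, by tauto, t, by tauto, rfl⟩]
    by_cases hst : s + t ∈ ({a+b, a+b+d, a+t, a+t+d, s+b, s+b+d} : Finset G)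
    · exfalso
      refine hd (hap d ?_)
      have hSP : ({a, a + d, s} : Finset G) + T =
          ({a+b, a+b+d, a+t, a+t+d, s+b, s+b+d} : Finset G) :=
        hSig.trans (Finset.union_eq_left.mpr (by simpa using hst))
      rw [hSP]
      ext g
      simp only [Finset.mem_add, Finset.mem_insert, Finset.mem_singleton]
      constructor
      · rintro ⟨u, (rfl | rfl | rfl | rfl | rfl | rfl), v, rfl, rfl⟩
        · exact Or.inr (Or.inl rfl)
        · exact Or.inl (hdd (a + b))
        · exact Or.inr (Or.inr (Or.inr (Or.inl rfl)))
        · exact Or.inr (Or.inr (Or.inl (hdd (a + t))))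
        · exact Or.inr (Or.inr (Or.inr (Or.inr (Or.inr rfl))))
        · exact Or.inr (Or.inr (Or.inr (Or.inr (Or.inl (hdd (s + b))))))
      · rintro (rfl | rfl | rfl | rfl | rfl | rfl)
        exacts [⟨a+b+d, by tauto, d, rfl, hdd _⟩,
          ⟨a+b, by tauto, d, rfl, rfl⟩,
          ⟨a+t+d, by tauto, d, rfl, hdd _⟩,
          ⟨a+t, by tauto, d, rfl, rfl⟩,
          ⟨s+b+d, by tauto, d, rfl, hdd _⟩,
          ⟨s+b, by tauto, d, rfl, rfl⟩]
    · by_cases hC : a + t = s + b ∨ a + t = s + b + d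
      · rcases hC with hC | hC
        · refine ⟨b - a, ?_⟩
          rw [hTeq, singleton_add_triple]
          exact triple_congr (by abel) (by abel) (lin hC (by abel))
        · refine ⟨b - a + d, ?_⟩
          rw [hTeq, singleton_add_triple, perm_bac]
          exact triple_congr (by abel) (lin h2.symm (by abel)) (lin hC (by abel))
      · exfalso
        push_neg at hC
        obtain ⟨hC1, hC2⟩ := hC
        have m5 : s + b ∉ ({s+b+d} : Finset G) := by
          simp only [Finset.mem_singleton]
          exact fun h => hd (lin h.symm (by abel))
        have m4 : a + t + d ∉ ({s+b, s+b+d} : Finset G) := by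
          simp only [Finset.mem_insert, Finset.mem_singleton]
          push_neg
          exact ⟨fun h => hC2 (lin2 h h2.symm (by abel)), fun h => hC1 (lin h (by abel))⟩
        have m3 : a + t ∉ ({a+t+d, s+b, s+b+d} : Finset G) := by
          simp only [Finset.mem_insert, Finset.mem_singleton]
          push_neg
          exact ⟨fun h => hd (lin h.symm (by abel)), hC1, hC2⟩
        have m2 : a + b + d ∉ ({a+t, a+t+d, s+b, s+b+d} : Finset G) := by
          simp only [Finset.mem_insert, Finset.mem_singleton]
          push_neg
          refine ⟨fun h => htbd (lin h.symm (by abel)), fun h => htb (lin h.symm (by abel)),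
            fun h => h3 (lin h (by abel)), fun h => h1 (lin h (by abel))⟩
        have m1 : a + b ∉ ({a+b+d, a+t, a+t+d, s+b, s+b+d} : Finset G) := by
          simp only [Finset.mem_insert, Finset.mem_singleton]
          push_neg
          refine ⟨fun h => hd (lin h.symm (by abel)), fun h => htb (lin h.symm (by abel)),
            fun h => htbd (lin2 h.symm h2.symm (by abel)), fun h => h1 (lin h (by abel)),
            fun h => h3 (lin2 h h2 (by abel))⟩
        have h7 : (insert (s + t) ({a+b, a+b+d, a+t, a+t+d, s+b, s+b+d} : Finset G)).card = 7 := by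
          rw [Finset.card_insert_of_notMem hst, Finset.card_insert_of_notMem m1,
            Finset.card_insert_of_notMem m2, Finset.card_insert_of_notMem m3,
            Finset.card_insert_of_notMem m4, Finset.card_insert_of_notMem m5,
            Finset.card_singleton]
        have hcard7 : (({a, a + d, s} : Finset G) + T).card = 7 := by
          rw [hSig, Finset.union_comm, ← Finset.insert_eq, h7]
        omega
  · push_neg at hmeet
    exfalso
    refine hd (hap d ?_)
    have hdis : Disjoint (({a} : Finset G) + T) (({a + d} : Finset G) + T) := by
      rw [Finset.disjoint_left]
      intro g hg1 hg2
      simp only [Finset.mem_add, Finset.mem_singleton] at hg1 hg2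
      obtain ⟨u, rfl, t1, ht1, rfl⟩ := hg1
      obtain ⟨v, rfl, t2, ht2, he⟩ := hg2
      exact hmeet t2 ht2 (by rwa [show t2 + d = t1 from lin he (by abel)])
    have hpair : ({a, a + d} : Finset G) + T = (({a} : Finset G) + T) ∪ (({a+d} : Finset G) + T) := by
      rw [show ({a, a + d} : Finset G) = {a} ∪ {a + d} from rfl, Finset.union_add]
    have hc6 : (({a, a + d} : Finset G) + T).card = 6 := by
      rw [hpair, Finset.card_union_of_disjoint hdis, card_sadd, card_sadd, hT3]
    have hsub : ({a, a + d} : Finset G) + T ⊆ ({a, a + d, s} : Finset G) + T :=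
      Finset.add_subset_add_right (by intro g hg; simp only [Finset.mem_insert, Finset.mem_singleton] at hg ⊢; tauto)
    have hEq : ({a, a + d, s} : Finset G) + T = ({a, a + d} : Finset G) + T :=
      (Finset.eq_of_subset_of_card_le hsub (by rw [hc6]; exact hc)).symm
    rw [hEq, add_right_comm]
    congr 1
    ext g
    simp only [Finset.mem_add, Finset.mem_insert, Finset.mem_singleton]
    constructor
    · rintro ⟨u, (rfl | rfl), v, rfl, rfl⟩
      · exact Or.inr rfl
      · exact Or.inl (hdd a)
    · rintro (hg | hg)
      exacts [⟨a + d, Or.inr rfl, d, rfl, by rw [hg]; exact hdd a⟩,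
        ⟨a, Or.inl rfl, d, rfl, hg.symm⟩]

lemma negcase {x y : G} (hx : x ≠ 0) (hy : y ≠ 0) (hxy : x ≠ y) (s4 : x+x ≠ 0) (s5 : y+y ≠ 0)
    (s6 : x+x ≠ y+y) (s7 : x+y ≠ 0) (s8 : x+x ≠ y) (s9 : y+y ≠ x) (c : G) {T : Finset G}
    (hTeq : T = {c} + ({0, -x, -y} : Finset G))
    (hc : (({0, x, y} : Finset G) + T).card ≤ 6) : False := by
  have hL : ({0, x, y} : Finset G) + {0, -x, -y} = {0, x, y, -x, -y, x - y, y - x} := by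
    ext g
    simp only [Finset.mem_add, Finset.mem_insert, Finset.mem_singleton]
    constructor
    · rintro ⟨u, hu, v, hv, hg⟩
      rcases hu with rfl | hu | hu <;> rcases hv with rfl | hv | hv
      · exact Or.inl (by rw [← hg]; abel)
      · exact Or.inr (Or.inr (Or.inr (Or.inl (by rw [← hg, hv]; abel))))
      · exact Or.inr (Or.inr (Or.inr (Or.inr (Or.inl (by rw [← hg, hv]; abel)))))
      · exact Or.inr (Or.inl (by rw [← hg, hu]; abel))
      · exact Or.inl (by rw [← hg, hu, hv]; abel)
      · exact Or.inr (Or.inr (Or.inr (Or.inr (Or.inr (Or.inl (by rw [← hg, hu, hv]; abel))))))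
      · exact Or.inr (Or.inr (Or.inl (by rw [← hg, hu]; abel)))
      · exact Or.inr (Or.inr (Or.inr (Or.inr (Or.inr (Or.inr (by rw [← hg, hu, hv]; abel))))))
      · exact Or.inl (by rw [← hg, hu, hv]; abel)
    · rintro (h | h | h | h | h | h | h)
      exacts [⟨0, by tauto, 0, by tauto, by rw [h]; abel⟩,
        ⟨x, by tauto, 0, by tauto, by rw [h]; abel⟩,
        ⟨y, by tauto, 0, by tauto, by rw [h]; abel⟩,
        ⟨0, by tauto, -x, by tauto, by rw [h]; abel⟩,
        ⟨0, by tauto, -y, by tauto, by rw [h]; abel⟩,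
        ⟨x, by tauto, -y, by tauto, by rw [h]; abel⟩,
        ⟨y, by tauto, -x, by tauto, by rw [h]; abel⟩]
  have n6 : x - y ∉ ({y - x} : Finset G) := by
    simp only [Finset.mem_singleton]
    exact fun h => s6 (lin h (by abel))
  have n5 : -y ∉ ({x - y, y - x} : Finset G) := by
    simp only [Finset.mem_insert, Finset.mem_singleton]
    push_neg
    exact ⟨fun h => hx (lin h.symm (by abel)), fun h => s9 (lin h.symm (by abel))⟩
  have n4 : -x ∉ ({-y, x - y, y - x} : Finset G) := by
    simp only [Finset.mem_insert, Finset.mem_singleton]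
    push_neg
    exact ⟨fun h => hxy (lin h.symm (by abel)), fun h => s8 (lin h.symm (by abel)),
      fun h => hy (lin h.symm (by abel))⟩
  have n3 : y ∉ ({-x, -y, x - y, y - x} : Finset G) := by
    simp only [Finset.mem_insert, Finset.mem_singleton]
    push_neg
    exact ⟨fun h => s7 (lin h (by abel)), fun h => s5 (lin h (by abel)),
      fun h => s9 (lin h (by abel)), fun h => hx (lin h (by abel))⟩
  have n2 : x ∉ ({y, -x, -y, x - y, y - x} : Finset G) := by
    simp only [Finset.mem_insert, Finset.mem_singleton]
    push_neg
    exact ⟨hxy, fun h => s4 (lin h (by abel)), fun h => s7 (lin h (by abel)),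
      fun h => hy (lin h (by abel)), fun h => s8 (lin h (by abel))⟩
  have n1 : (0 : G) ∉ ({x, y, -x, -y, x - y, y - x} : Finset G) := by
    simp only [Finset.mem_insert, Finset.mem_singleton]
    push_neg
    exact ⟨hx.symm, hy.symm, fun h => hx (lin h (by abel)), fun h => hy (lin h (by abel)),
      fun h => hxy (lin h.symm (by abel)), fun h => hxy (lin h (by abel))⟩
  have hL7 : ({0, x, y, -x, -y, x - y, y - x} : Finset G).card = 7 := by
    rw [Finset.card_insert_of_notMem n1, Finset.card_insert_of_notMem n2,
      Finset.card_insert_of_notMem n3, Finset.card_insert_of_notMem n4,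
      Finset.card_insert_of_notMem n5, Finset.card_insert_of_notMem n6,
      Finset.card_singleton]
  rw [hTeq, add_left_comm, hL, card_sadd, hL7] at hc
  omega

lemma uniq {x y : G} (hx : x ≠ 0) (hy : y ≠ 0) (hxy : x ≠ y) (s4 : x+x ≠ 0) (s5 : y+y ≠ 0)
    (s6 : x+x ≠ y+y) (s7 : x+y ≠ 0) (s8 : x+x ≠ y) (s9 : y+y ≠ x) (c c' : G) (hcc : c ≠ c') :
    ((({c} : Finset G) + {0, x, y}) ∩ (({c'} : Finset G) + {0, x, y})).card ≤ 1 := by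
  rw [Finset.card_le_one]
  intro p hp q hq
  rw [Finset.mem_inter] at hp hq
  obtain ⟨hp1, hp2⟩ := hp
  obtain ⟨hq1, hq2⟩ := hq
  simp only [Finset.mem_add, Finset.mem_insert, Finset.mem_singleton, exists_eq_left] at hp1 hp2 hq1 hq2
  obtain ⟨u1, hu1, he1⟩ := hp1
  obtain ⟨u2, hu2, he2⟩ := hp2
  obtain ⟨u3, hu3, he3⟩ := hq1
  obtain ⟨u4, hu4, he4⟩ := hq2
  have h12 : c + u1 = c' + u2 := he1.trans he2.symm
  have h34 : c + u3 = c' + u4 := he3.trans he4.symm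
  have hne : u2 - u1 ≠ 0 := fun h => hcc (lin2 h12 h (by abel))
  have heq : u2 - u1 = u4 - u3 := lin2 h12.symm h34 (by abel)
  have hkey : u1 = u3 := by
    rcases hu1 with rfl | rfl | rfl <;> rcases hu2 with rfl | rfl | rfl <;>
      rcases hu3 with rfl | rfl | rfl <;> rcases hu4 with rfl | rfl | rfl <;>
      first
        | rfl
        | (refine (hne ?_).elim; abel1)
        | (refine (hne (lin heq ?_)).elim; abel1)
        | (refine (hne (lin heq.symm ?_)).elim; abel1)
        | (refine (hx (lin heq ?_)).elim; abel1)
        | (refine (hx (lin heq.symm ?_)).elim; abel1)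
        | (refine (hx.symm (lin heq ?_)).elim; abel1)
        | (refine (hx.symm (lin heq.symm ?_)).elim; abel1)
        | (refine (hy (lin heq ?_)).elim; abel1)
        | (refine (hy (lin heq.symm ?_)).elim; abel1)
        | (refine (hy.symm (lin heq ?_)).elim; abel1)
        | (refine (hy.symm (lin heq.symm ?_)).elim; abel1)
        | (refine (hxy (lin heq ?_)).elim; abel1)
        | (refine (hxy (lin heq.symm ?_)).elim; abel1)
        | (refine (hxy.symm (lin heq ?_)).elim; abel1)
        | (refine (hxy.symm (lin heq.symm ?_)).elim; abel1)
        | (refine (s4 (lin heq ?_)).elim; abel1)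
        | (refine (s4 (lin heq.symm ?_)).elim; abel1)
        | (refine (s4.symm (lin heq ?_)).elim; abel1)
        | (refine (s4.symm (lin heq.symm ?_)).elim; abel1)
        | (refine (s5 (lin heq ?_)).elim; abel1)
        | (refine (s5 (lin heq.symm ?_)).elim; abel1)
        | (refine (s5.symm (lin heq ?_)).elim; abel1)
        | (refine (s5.symm (lin heq.symm ?_)).elim; abel1)
        | (refine (s6 (lin heq ?_)).elim; abel1)
        | (refine (s6 (lin heq.symm ?_)).elim; abel1)
        | (refine (s6.symm (lin heq ?_)).elim; abel1)
        | (refine (s6.symm (lin heq.symm ?_)).elim; abel1)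
        | (refine (s7 (lin heq ?_)).elim; abel1)
        | (refine (s7 (lin heq.symm ?_)).elim; abel1)
        | (refine (s7.symm (lin heq ?_)).elim; abel1)
        | (refine (s7.symm (lin heq.symm ?_)).elim; abel1)
        | (refine (s8 (lin heq ?_)).elim; abel1)
        | (refine (s8 (lin heq.symm ?_)).elim; abel1)
        | (refine (s8.symm (lin heq ?_)).elim; abel1)
        | (refine (s8.symm (lin heq.symm ?_)).elim; abel1)
        | (refine (s9 (lin heq ?_)).elim; abel1)
        | (refine (s9 (lin heq.symm ?_)).elim; abel1)
        | (refine (s9.symm (lin heq ?_)).elim; abel1)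
        | (refine (s9.symm (lin heq.symm ?_)).elim; abel1)
  rw [← he1, ← he3, hkey]
theorem key (μ : ℕ) (hμ : μ ≤ 1) (x y z w : G) (hx : x ≠ 0) (hy : y ≠ 0) (hxy : x ≠ y)
    (hz0 : z ≠ 0) (hw0 : w ≠ 0) (hzw : z ≠ w)
    (hS3 : ({0, x, y} : Finset G).card = 3) (hT3 : ({0, z, w} : Finset G).card = 3)
    (hap : IsAperiodic (({0, x, y} : Finset G) + {0, z, w}))
    (hcard : (({0, x, y} : Finset G) + ({0, z, w} : Finset G)).card + μ = 6) :
    ∃ r a : G, (IsAP r ({0, x, y} : Finset G) ∨ IsAP r ({0, z, w} : Finset G)) ∨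
      ({0, z, w} : Finset G) = {a} + ({0, x, y} : Finset G) := by
  have hc6 : (({0, x, y} : Finset G) + ({0, z, w} : Finset G)).card ≤ 6 := by omega
  by_cases a1 : y = x + x
  · exact ⟨x, 0, Or.inl (Or.inl (isAP_triple x 0 hS3
      (triple_congr (by abel) (by abel) (by rw [a1]; abel))))⟩
  by_cases a2 : x = y + y
  · exact ⟨y, 0, Or.inl (Or.inl (isAP_triple y 0 hS3
      ((perm_acb 0 x y).trans (triple_congr (by abel) (by abel) (by rw [a2]; abel)))))⟩
  by_cases a3 : y = -x
  · exact ⟨x, 0, Or.inl (Or.inl (isAP_triple x (-x) hS3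
      ((perm_cab 0 x y).trans (triple_congr (by rw [a3]) (by abel) (by abel)))))⟩
  by_cases t4 : x + x = 0
  · have hSrep : ({0, x, y} : Finset G) = {0, 0 + x, y} := triple_congr rfl (by abel) rfl
    obtain ⟨c, hc⟩ := torsion_core x 0 y t4 hx hy.symm
      (fun h => hxy (by rw [zero_add] at h; exact h)) {0, z, w} hT3
      (by rwa [hSrep] at hap) (by rwa [hSrep] at hc6)
    exact ⟨0, c, Or.inr (by rwa [← hSrep] at hc)⟩
  by_cases t5 : y + y = 0
  · have hSrep : ({0, x, y} : Finset G) = {0, 0 + y, x} :=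
      (perm_acb 0 x y).trans (triple_congr rfl (by abel) rfl)
    obtain ⟨c, hc⟩ := torsion_core y 0 x t5 hy hx.symm
      (fun h => hxy (by rw [zero_add] at h; exact h.symm)) {0, z, w} hT3
      (by rwa [hSrep] at hap) (by rwa [hSrep] at hc6)
    exact ⟨0, c, Or.inr (by rwa [← hSrep] at hc)⟩
  by_cases t6 : x + x = y + y
  · have h2 : (x - y) + (x - y) = 0 := lin t6 (by abel)
    have hSrep : ({0, x, y} : Finset G) = {y, y + (x - y), 0} :=
      (perm_cba 0 x y).trans (triple_congr rfl (by abel) rfl)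
    obtain ⟨c, hc⟩ := torsion_core (x - y) y 0 h2 (fun h => hxy (lin h (by abel))) hy
      (fun h => hx (lin h (by abel))) {0, z, w} hT3
      (by rwa [hSrep] at hap) (by rwa [hSrep] at hc6)
    exact ⟨0, c, Or.inr (by rwa [← hSrep] at hc)⟩
  by_cases b1 : w = z + z
  · exact ⟨z, 0, Or.inl (Or.inr (isAP_triple z 0 hT3
      (triple_congr (by abel) (by abel) (by rw [b1]; abel))))⟩
  by_cases b2 : z = w + w
  · exact ⟨w, 0, Or.inl (Or.inr (isAP_triple w 0 hT3
      ((perm_acb 0 z w).trans (triple_congr (by abel) (by abel) (by rw [b2]; abel)))))⟩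
  by_cases b3 : w = -z
  · exact ⟨z, 0, Or.inl (Or.inr (isAP_triple z (-z) hT3
      ((perm_cab 0 z w).trans (triple_congr (by rw [b3]) (by abel) (by abel)))))⟩
  have hapT : IsAperiodic (({0, z, w} : Finset G) + ({0, x, y} : Finset G)) := by
    rwa [add_comm] at hap
  have hcT6 : (({0, z, w} : Finset G) + ({0, x, y} : Finset G)).card ≤ 6 := by
    rwa [add_comm] at hc6
  by_cases u4 : z + z = 0
  · have hTrep : ({0, z, w} : Finset G) = {0, 0 + z, w} := triple_congr rfl (by abel) rfl
    obtain ⟨c, hc⟩ := torsion_core z 0 w u4 hz0 hw0.symm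
      (fun h => hzw (by rw [zero_add] at h; exact h)) {0, x, y} hS3
      (by rwa [hTrep] at hapT) (by rwa [hTrep] at hcT6)
    refine ⟨0, -c, Or.inr ?_⟩
    rw [hc, ← add_assoc, Finset.singleton_add_singleton, neg_add_cancel, zero_sadd, ← hTrep]
  by_cases u5 : w + w = 0
  · have hTrep : ({0, z, w} : Finset G) = {0, 0 + w, z} :=
      (perm_acb 0 z w).trans (triple_congr rfl (by abel) rfl)
    obtain ⟨c, hc⟩ := torsion_core w 0 z u5 hw0 hz0.symm
      (fun h => hzw (by rw [zero_add] at h; exact h.symm)) {0, x, y} hS3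
      (by rwa [hTrep] at hapT) (by rwa [hTrep] at hcT6)
    refine ⟨0, -c, Or.inr ?_⟩
    rw [hc, ← add_assoc, Finset.singleton_add_singleton, neg_add_cancel, zero_sadd, ← hTrep]
  by_cases u6 : z + z = w + w
  · have h2 : (z - w) + (z - w) = 0 := lin u6 (by abel)
    have hTrep : ({0, z, w} : Finset G) = {w, w + (z - w), 0} :=
      (perm_cba 0 z w).trans (triple_congr rfl (by abel) rfl)
    obtain ⟨c, hc⟩ := torsion_core (z - w) w 0 h2 (fun h => hzw (lin h (by abel))) hw0
      (fun h => hz0 (lin h (by abel))) {0, x, y} hS3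
      (by rwa [hTrep] at hapT) (by rwa [hTrep] at hcT6)
    refine ⟨0, -c, Or.inr ?_⟩
    rw [hc, ← add_assoc, Finset.singleton_add_singleton, neg_add_cancel, zero_sadd, ← hTrep]
  -- both Sidon
  have s7 : x + y ≠ 0 := fun h => a3 (lin h (by abel))
  have s8 : x + x ≠ y := fun h => a1 h.symm
  have s9 : y + y ≠ x := fun h => a2 h.symm
  have t7 : z + w ≠ 0 := fun h => b3 (lin h (by abel))
  -- counting
  have hsubA : ({0, x, y} : Finset G) ⊆ ({0, x, y} : Finset G) + {0, z, w} := by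
    intro g hg; rw [Finset.mem_add]
    exact ⟨g, hg, 0, by simp, add_zero g⟩
  have hsubB : ({z} : Finset G) + {0, x, y} ⊆ ({0, x, y} : Finset G) + {0, z, w} := by
    rw [add_comm (({0, x, y}) : Finset G)]
    exact Finset.add_subset_add_right (by simp)
  have hsubC : ({w} : Finset G) + {0, x, y} ⊆ ({0, x, y} : Finset G) + {0, z, w} := by
    rw [add_comm (({0, x, y}) : Finset G)]
    exact Finset.add_subset_add_right (by simp)
  have hu1 : (({0, x, y} : Finset G) ∩ (({z} : Finset G) + {0, x, y})).card ≤ 1 := by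
    have := uniq hx hy hxy t4 t5 t6 s7 s8 s9 0 z hz0.symm
    rwa [zero_sadd] at this
  have hu2 : (({0, x, y} : Finset G) ∩ (({w} : Finset G) + {0, x, y})).card ≤ 1 := by
    have := uniq hx hy hxy t4 t5 t6 s7 s8 s9 0 w hw0.symm
    rwa [zero_sadd] at this
  have hu3 : ((({z} : Finset G) + {0, x, y}) ∩ (({w} : Finset G) + {0, x, y})).card ≤ 1 :=
    uniq hx hy hxy t4 t5 t6 s7 s8 s9 z w hzw
  have e1 : (({0, x, y} : Finset G) ∪ (({z} : Finset G) + {0, x, y})).card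
      + (({0, x, y} : Finset G) ∩ (({z} : Finset G) + {0, x, y})).card
      = ({0, x, y} : Finset G).card + (({z} : Finset G) + {0, x, y}).card :=
    Finset.card_union_add_card_inter _ _
  have e2 : ((({0, x, y} : Finset G) ∪ (({z} : Finset G) + {0, x, y}))
        ∪ (({w} : Finset G) + {0, x, y})).card
      + ((({0, x, y} : Finset G) ∪ (({z} : Finset G) + {0, x, y}))
        ∩ (({w} : Finset G) + {0, x, y})).card
      = (({0, x, y} : Finset G) ∪ (({z} : Finset G) + {0, x, y})).card
        + (({w} : Finset G) + {0, x, y}).card :=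
    Finset.card_union_add_card_inter _ _
  have e3 : ((({0, x, y} : Finset G) ∪ (({z} : Finset G) + {0, x, y}))
        ∩ (({w} : Finset G) + {0, x, y})).card
      ≤ (({0, x, y} : Finset G) ∩ (({w} : Finset G) + {0, x, y})).card
        + ((({z} : Finset G) + {0, x, y}) ∩ (({w} : Finset G) + {0, x, y})).card := by
    rw [Finset.union_inter_distrib_right]
    exact Finset.card_union_le _ _
  have cB : (({z} : Finset G) + {0, x, y}).card = 3 := by rw [card_sadd]; exact hS3
  have cC : (({w} : Finset G) + {0, x, y}).card = 3 := by rw [card_sadd]; exact hS3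
  have hUsub : (({0, x, y} : Finset G) ∪ (({z} : Finset G) + {0, x, y}))
      ∪ (({w} : Finset G) + {0, x, y}) ⊆ ({0, x, y} : Finset G) + {0, z, w} :=
    Finset.union_subset (Finset.union_subset hsubA hsubB) hsubC
  have hU := Finset.card_le_card hUsub
  have hAB : 0 < (({0, x, y} : Finset G) ∩ (({z} : Finset G) + {0, x, y})).card := by omega
  have hAC : 0 < (({0, x, y} : Finset G) ∩ (({w} : Finset G) + {0, x, y})).card := by omega
  have hBC : 0 < ((({z} : Finset G) + {0, x, y}) ∩ (({w} : Finset G) + {0, x, y})).card := by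
    omega
  -- memberships
  have hzD : z = x ∨ z = y ∨ z = x - y ∨ z = -x ∨ z = -y ∨ z = y - x := by
    obtain ⟨g, hg⟩ := Finset.card_pos.mp hAB
    rw [Finset.mem_inter] at hg
    obtain ⟨hm1, hm2⟩ := hg
    simp only [Finset.mem_add, Finset.mem_insert, Finset.mem_singleton, exists_eq_left] at hm1 hm2
    obtain ⟨u, hu, he⟩ := hm2
    rcases hm1 with rfl | rfl | rfl <;> rcases hu with rfl | rfl | rfl
    · exact ((hz0 (lin he (by abel))).elim)
    · exact Or.inr (Or.inr (Or.inr (Or.inl (lin he (by abel)))))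
    · exact Or.inr (Or.inr (Or.inr (Or.inr (Or.inl (lin he (by abel))))))
    · exact Or.inl (lin he (by abel))
    · exact ((hz0 (lin he (by abel))).elim)
    · exact Or.inr (Or.inr (Or.inl (lin he (by abel))))
    · exact Or.inr (Or.inl (lin he (by abel)))
    · exact Or.inr (Or.inr (Or.inr (Or.inr (Or.inr (lin he (by abel))))))
    · exact ((hz0 (lin he (by abel))).elim)
  have hwD : w = x ∨ w = y ∨ w = x - y ∨ w = -x ∨ w = -y ∨ w = y - x := by
    obtain ⟨g, hg⟩ := Finset.card_pos.mp hAC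
    rw [Finset.mem_inter] at hg
    obtain ⟨hm1, hm2⟩ := hg
    simp only [Finset.mem_add, Finset.mem_insert, Finset.mem_singleton, exists_eq_left] at hm1 hm2
    obtain ⟨u, hu, he⟩ := hm2
    rcases hm1 with rfl | rfl | rfl <;> rcases hu with rfl | rfl | rfl
    · exact ((hw0 (lin he (by abel))).elim)
    · exact Or.inr (Or.inr (Or.inr (Or.inl (lin he (by abel)))))
    · exact Or.inr (Or.inr (Or.inr (Or.inr (Or.inl (lin he (by abel))))))
    · exact Or.inl (lin he (by abel))
    · exact ((hw0 (lin he (by abel))).elim)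
    · exact Or.inr (Or.inr (Or.inl (lin he (by abel))))
    · exact Or.inr (Or.inl (lin he (by abel)))
    · exact Or.inr (Or.inr (Or.inr (Or.inr (Or.inr (lin he (by abel))))))
    · exact ((hw0 (lin he (by abel))).elim)
  have hdD : z - w = x ∨ z - w = y ∨ z - w = x - y ∨ z - w = -x ∨ z - w = -y ∨
      z - w = y - x := by
    obtain ⟨g, hg⟩ := Finset.card_pos.mp hBC
    rw [Finset.mem_inter] at hg
    obtain ⟨hm1, hm2⟩ := hg
    simp only [Finset.mem_add, Finset.mem_insert, Finset.mem_singleton, exists_eq_left] at hm1 hm2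
    obtain ⟨u, hu, heB⟩ := hm1
    obtain ⟨v, hv, heC⟩ := hm2
    have he : z + u = w + v := heB.trans heC.symm
    rcases hu with rfl | rfl | rfl <;> rcases hv with rfl | rfl | rfl
    · exact ((hzw (lin he (by abel))).elim)
    · exact Or.inl (lin he (by abel))
    · exact Or.inr (Or.inl (lin he (by abel)))
    · exact Or.inr (Or.inr (Or.inr (Or.inl (lin he (by abel)))))
    · exact ((hzw (lin he (by abel))).elim)
    · exact Or.inr (Or.inr (Or.inr (Or.inr (Or.inr (lin he (by abel))))))
    · exact Or.inr (Or.inr (Or.inr (Or.inr (Or.inl (lin he (by abel))))))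
    · exact Or.inr (Or.inr (Or.inl (lin he (by abel))))
    · exact ((hzw (lin he (by abel))).elim)
  rcases hzD with hz1 | hz1 | hz1 | hz1 | hz1 | hz1 <;>
      rcases hwD with hw1 | hw1 | hw1 | hw1 | hw1 | hw1
  · exact (hzw (hz1.trans hw1.symm)).elim
  · refine ⟨0, 0, Or.inr ?_⟩
    rw [singleton_add_triple]
    exact triple_congr (by abel) (by rw [hz1]; abel) (by rw [hw1]; abel)
  · exact (negcase hx hy hxy t4 t5 t6 s7 s8 s9 (x) (by rw [singleton_add_triple]; exact (perm_bac 0 z w).trans (triple_congr (by rw [hz1]; abel) (by abel) (by rw [hw1]; abel))) hc6).elim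
  · exact (t7 (lin2 hz1 hw1 (by abel))).elim
  · rcases hdD with hd | hd | hd | hd | hd | hd <;> rw [hz1, hw1] at hd
    · exact (hy (lin hd (by abel))).elim
    · exact (hx (lin hd (by abel))).elim
    · exact (t5 (lin hd (by abel))).elim
    · have hw' : w = x + x := lin2 hw1 hd.symm (by abel)
      exact ⟨x, 0, Or.inl (Or.inr (isAP_triple (x) 0 hT3 (triple_congr (by abel) (by rw [hz1]; abel) (by rw [hw']; abel))))⟩
    · have hz' : z = -y + -y := lin2 hz1 hd (by abel)
      exact ⟨-y, 0, Or.inl (Or.inr (isAP_triple (-y) 0 hT3 ((perm_acb 0 z w).trans (triple_congr (by abel) (by rw [hw1]; abel) (by rw [hz']; abel)))))⟩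
    · exact (t4 (lin hd (by abel))).elim
  · rcases hdD with hd | hd | hd | hd | hd | hd <;> rw [hz1, hw1] at hd
    · exact (hxy (lin hd (by abel))).elim
    · exact (t6 (lin hd (by abel))).elim
    · exact (hx (lin hd (by abel))).elim
    · have hw' : w = x + x := lin2 hw1 hd.symm (by abel)
      exact ⟨x, 0, Or.inl (Or.inr (isAP_triple (x) 0 hT3 (triple_congr (by abel) (by rw [hz1]; abel) (by rw [hw']; abel))))⟩
    · exact (t4 (lin hd (by abel))).elim
    · have hz' : z = (y - x) + (y - x) := lin2 hz1 hd (by abel)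
      exact ⟨y - x, 0, Or.inl (Or.inr (isAP_triple (y - x) 0 hT3 ((perm_acb 0 z w).trans (triple_congr (by abel) (by rw [hw1]; abel) (by rw [hz']; abel)))))⟩
  · refine ⟨0, 0, Or.inr ?_⟩
    rw [singleton_add_triple]
    exact (perm_acb 0 z w).trans (triple_congr (by abel) (by rw [hw1]; abel) (by rw [hz1]; abel))
  · exact (hzw (hz1.trans hw1.symm)).elim
  · rcases hdD with hd | hd | hd | hd | hd | hd <;> rw [hz1, hw1] at hd
    · exact (t6 (lin hd.symm (by abel))).elim
    · exact (hxy (lin hd.symm (by abel))).elim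
    · have hz' : z = (x - y) + (x - y) := lin2 hz1 hd (by abel)
      exact ⟨x - y, 0, Or.inl (Or.inr (isAP_triple (x - y) 0 hT3 ((perm_acb 0 z w).trans (triple_congr (by abel) (by rw [hw1]; abel) (by rw [hz']; abel)))))⟩
    · exact (t5 (lin hd (by abel))).elim
    · have hw' : w = y + y := lin2 hw1 hd.symm (by abel)
      exact ⟨y, 0, Or.inl (Or.inr (isAP_triple (y) 0 hT3 (triple_congr (by abel) (by rw [hz1]; abel) (by rw [hw']; abel))))⟩
    · exact (hy (lin hd (by abel))).elim
  · rcases hdD with hd | hd | hd | hd | hd | hd <;> rw [hz1, hw1] at hd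
    · exact (hy (lin hd (by abel))).elim
    · exact (hx (lin hd (by abel))).elim
    · exact (t5 (lin hd (by abel))).elim
    · have hz' : z = -x + -x := lin2 hz1 hd (by abel)
      exact ⟨-x, 0, Or.inl (Or.inr (isAP_triple (-x) 0 hT3 ((perm_acb 0 z w).trans (triple_congr (by abel) (by rw [hw1]; abel) (by rw [hz']; abel)))))⟩
    · have hw' : w = y + y := lin2 hw1 hd.symm (by abel)
      exact ⟨y, 0, Or.inl (Or.inr (isAP_triple (y) 0 hT3 (triple_congr (by abel) (by rw [hz1]; abel) (by rw [hw']; abel))))⟩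
    · exact (t4 (lin hd (by abel))).elim
  · exact (t7 (lin2 hz1 hw1 (by abel))).elim
  · exact (negcase hx hy hxy t4 t5 t6 s7 s8 s9 (y) (by rw [singleton_add_triple]; exact (perm_bca 0 z w).trans (triple_congr (by rw [hz1]; abel) (by rw [hw1]; abel) (by abel))) hc6).elim
  · exact (negcase hx hy hxy t4 t5 t6 s7 s8 s9 (x) (by rw [singleton_add_triple]; exact (perm_cab 0 z w).trans (triple_congr (by rw [hw1]; abel) (by abel) (by rw [hz1]; abel))) hc6).elim
  · rcases hdD with hd | hd | hd | hd | hd | hd <;> rw [hz1, hw1] at hd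
    · exact (t5 (lin hd.symm (by abel))).elim
    · have hz' : z = y + y := lin2 hz1 hd (by abel)
      exact ⟨y, 0, Or.inl (Or.inr (isAP_triple (y) 0 hT3 ((perm_acb 0 z w).trans (triple_congr (by abel) (by rw [hw1]; abel) (by rw [hz']; abel)))))⟩
    · exact (hy (lin hd.symm (by abel))).elim
    · exact (t6 (lin hd (by abel))).elim
    · exact (hxy (lin hd (by abel))).elim
    · have hw' : w = (x - y) + (x - y) := lin2 hw1 hd.symm (by abel)
      exact ⟨x - y, 0, Or.inl (Or.inr (isAP_triple (x - y) 0 hT3 (triple_congr (by abel) (by rw [hz1]; abel) (by rw [hw']; abel))))⟩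
  · exact (hzw (hz1.trans hw1.symm)).elim
  · rcases hdD with hd | hd | hd | hd | hd | hd <;> rw [hz1, hw1] at hd
    · exact (hxy (lin hd (by abel))).elim
    · exact (t6 (lin hd (by abel))).elim
    · exact (hx (lin hd (by abel))).elim
    · have hz' : z = -x + -x := lin2 hz1 hd (by abel)
      exact ⟨-x, 0, Or.inl (Or.inr (isAP_triple (-x) 0 hT3 ((perm_acb 0 z w).trans (triple_congr (by abel) (by rw [hw1]; abel) (by rw [hz']; abel)))))⟩
    · exact (t4 (lin hd (by abel))).elim
    · have hw' : w = (x - y) + (x - y) := lin2 hw1 hd.symm (by abel)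
      exact ⟨x - y, 0, Or.inl (Or.inr (isAP_triple (x - y) 0 hT3 (triple_congr (by abel) (by rw [hz1]; abel) (by rw [hw']; abel))))⟩
  · refine ⟨0, -y, Or.inr ?_⟩
    rw [singleton_add_triple]
    exact (perm_cba 0 z w).trans (triple_congr (by rw [hw1]; abel) (by rw [hz1]; abel) (by abel))
  · exact (t7 (lin2 hz1 hw1 (by abel))).elim
  · exact (t7 (lin2 hz1 hw1 (by abel))).elim
  · rcases hdD with hd | hd | hd | hd | hd | hd <;> rw [hz1, hw1] at hd
    · have hw' : w = -x + -x := lin2 hw1 hd.symm (by abel)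
      exact ⟨-x, 0, Or.inl (Or.inr (isAP_triple (-x) 0 hT3 (triple_congr (by abel) (by rw [hz1]; abel) (by rw [hw']; abel))))⟩
    · have hz' : z = y + y := lin2 hz1 hd (by abel)
      exact ⟨y, 0, Or.inl (Or.inr (isAP_triple (y) 0 hT3 ((perm_acb 0 z w).trans (triple_congr (by abel) (by rw [hw1]; abel) (by rw [hz']; abel)))))⟩
    · exact (t4 (lin hd.symm (by abel))).elim
    · exact (hy (lin hd.symm (by abel))).elim
    · exact (hx (lin hd.symm (by abel))).elim
    · exact (t5 (lin hd.symm (by abel))).elim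
  · rcases hdD with hd | hd | hd | hd | hd | hd <;> rw [hz1, hw1] at hd
    · have hw' : w = -x + -x := lin2 hw1 hd.symm (by abel)
      exact ⟨-x, 0, Or.inl (Or.inr (isAP_triple (-x) 0 hT3 (triple_congr (by abel) (by rw [hz1]; abel) (by rw [hw']; abel))))⟩
    · exact (t4 (lin hd.symm (by abel))).elim
    · have hz' : z = (x - y) + (x - y) := lin2 hz1 hd (by abel)
      exact ⟨x - y, 0, Or.inl (Or.inr (isAP_triple (x - y) 0 hT3 ((perm_acb 0 z w).trans (triple_congr (by abel) (by rw [hw1]; abel) (by rw [hz']; abel)))))⟩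
    · exact (hxy (lin hd.symm (by abel))).elim
    · exact (t6 (lin hd.symm (by abel))).elim
    · exact (hx (lin hd.symm (by abel))).elim
  · exact (hzw (hz1.trans hw1.symm)).elim
  · exact (negcase hx hy hxy t4 t5 t6 s7 s8 s9 (0) (by rw [singleton_add_triple]; exact triple_congr (by abel) (by rw [hz1]; abel) (by rw [hw1]; abel)) hc6).elim
  · refine ⟨0, -x, Or.inr ?_⟩
    rw [singleton_add_triple]
    exact (perm_bac 0 z w).trans (triple_congr (by rw [hz1]; abel) (by abel) (by rw [hw1]; abel))
  · rcases hdD with hd | hd | hd | hd | hd | hd <;> rw [hz1, hw1] at hd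
    · have hz' : z = x + x := lin2 hz1 hd (by abel)
      exact ⟨x, 0, Or.inl (Or.inr (isAP_triple (x) 0 hT3 ((perm_acb 0 z w).trans (triple_congr (by abel) (by rw [hw1]; abel) (by rw [hz']; abel)))))⟩
    · have hw' : w = -y + -y := lin2 hw1 hd.symm (by abel)
      exact ⟨-y, 0, Or.inl (Or.inr (isAP_triple (-y) 0 hT3 (triple_congr (by abel) (by rw [hz1]; abel) (by rw [hw']; abel))))⟩
    · exact (t4 (lin hd.symm (by abel))).elim
    · exact (hy (lin hd.symm (by abel))).elim
    · exact (hx (lin hd.symm (by abel))).elim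
    · exact (t5 (lin hd.symm (by abel))).elim
  · exact (t7 (lin2 hz1 hw1 (by abel))).elim
  · refine ⟨0, -y, Or.inr ?_⟩
    rw [singleton_add_triple]
    exact (perm_bca 0 z w).trans (triple_congr (by rw [hz1]; abel) (by rw [hw1]; abel) (by abel))
  · exact (negcase hx hy hxy t4 t5 t6 s7 s8 s9 (0) (by rw [singleton_add_triple]; exact (perm_acb 0 z w).trans (triple_congr (by abel) (by rw [hw1]; abel) (by rw [hz1]; abel))) hc6).elim
  · exact (hzw (hz1.trans hw1.symm)).elim
  · rcases hdD with hd | hd | hd | hd | hd | hd <;> rw [hz1, hw1] at hd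
    · exact (t5 (lin hd.symm (by abel))).elim
    · have hw' : w = -y + -y := lin2 hw1 hd.symm (by abel)
      exact ⟨-y, 0, Or.inl (Or.inr (isAP_triple (-y) 0 hT3 (triple_congr (by abel) (by rw [hz1]; abel) (by rw [hw']; abel))))⟩
    · exact (hy (lin hd.symm (by abel))).elim
    · exact (t6 (lin hd (by abel))).elim
    · exact (hxy (lin hd (by abel))).elim
    · have hz' : z = (y - x) + (y - x) := lin2 hz1 hd (by abel)
      exact ⟨y - x, 0, Or.inl (Or.inr (isAP_triple (y - x) 0 hT3 ((perm_acb 0 z w).trans (triple_congr (by abel) (by rw [hw1]; abel) (by rw [hz']; abel)))))⟩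
  · rcases hdD with hd | hd | hd | hd | hd | hd <;> rw [hz1, hw1] at hd
    · have hz' : z = x + x := lin2 hz1 hd (by abel)
      exact ⟨x, 0, Or.inl (Or.inr (isAP_triple (x) 0 hT3 ((perm_acb 0 z w).trans (triple_congr (by abel) (by rw [hw1]; abel) (by rw [hz']; abel)))))⟩
    · exact (t4 (lin hd.symm (by abel))).elim
    · have hw' : w = (y - x) + (y - x) := lin2 hw1 hd.symm (by abel)
      exact ⟨y - x, 0, Or.inl (Or.inr (isAP_triple (y - x) 0 hT3 (triple_congr (by abel) (by rw [hz1]; abel) (by rw [hw']; abel))))⟩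
    · exact (hxy (lin hd.symm (by abel))).elim
    · exact (t6 (lin hd.symm (by abel))).elim
    · exact (hx (lin hd.symm (by abel))).elim
  · exact (negcase hx hy hxy t4 t5 t6 s7 s8 s9 (y) (by rw [singleton_add_triple]; exact (perm_cba 0 z w).trans (triple_congr (by rw [hw1]; abel) (by rw [hz1]; abel) (by abel))) hc6).elim
  · exact (t7 (lin2 hz1 hw1 (by abel))).elim
  · refine ⟨0, -x, Or.inr ?_⟩
    rw [singleton_add_triple]
    exact (perm_cab 0 z w).trans (triple_congr (by rw [hw1]; abel) (by abel) (by rw [hz1]; abel))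
  · rcases hdD with hd | hd | hd | hd | hd | hd <;> rw [hz1, hw1] at hd
    · exact (t6 (lin hd.symm (by abel))).elim
    · exact (hxy (lin hd.symm (by abel))).elim
    · have hw' : w = (y - x) + (y - x) := lin2 hw1 hd.symm (by abel)
      exact ⟨y - x, 0, Or.inl (Or.inr (isAP_triple (y - x) 0 hT3 (triple_congr (by abel) (by rw [hz1]; abel) (by rw [hw']; abel))))⟩
    · exact (t5 (lin hd (by abel))).elim
    · have hz' : z = -y + -y := lin2 hz1 hd (by abel)
      exact ⟨-y, 0, Or.inl (Or.inr (isAP_triple (-y) 0 hT3 ((perm_acb 0 z w).trans (triple_congr (by abel) (by rw [hw1]; abel) (by rw [hz']; abel)))))⟩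
    · exact (hy (lin hd (by abel))).elim
  · exact (hzw (hz1.trans hw1.symm)).elim

end Helpers

/-- Lemma 2.6: sets of size 3 with small sumset. -/
theorem three_plus_three {G : Type*} [AddCommGroup G]
    (μ : ℕ) (hμ : μ ≤ 1)
    (S T : Finset G) (hS : S.card = 3) (hT : T.card = 3)
    (hap : IsAperiodic (S + T))
    (hsum : (S + T).card + μ = 6) :
    ∃ r a : G, (IsAP r S ∨ IsAP r T) ∨ T = {a} + S := by
  obtain ⟨s0, s1, s2, hs01, hs02, hs12, hSeq⟩ := Finset.card_eq_three.mp hS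
  obtain ⟨t0, t1, t2, ht01, ht02, ht12, hTeq⟩ := Finset.card_eq_three.mp hT
  have hSly : S = {s0} + ({0, s1 - s0, s2 - s0} : Finset G) := by
    rw [hSeq, singleton_add_triple]
    exact triple_congr (by abel) (by abel) (by abel)
  have hTly : T = {t0} + ({0, t1 - t0, t2 - t0} : Finset G) := by
    rw [hTeq, singleton_add_triple]
    exact triple_congr (by abel) (by abel) (by abel)
  have hST : S + T = {s0 + t0} +
      (({0, s1 - s0, s2 - s0} : Finset G) + ({0, t1 - t0, t2 - t0} : Finset G)) := by
    rw [hSly, hTly, add_add_add_comm, Finset.singleton_add_singleton]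
  have hS3' : ({0, s1 - s0, s2 - s0} : Finset G).card = 3 := by
    have h := hS; rw [hSly, card_sadd] at h; exact h
  have hT3' : ({0, t1 - t0, t2 - t0} : Finset G).card = 3 := by
    have h := hT; rw [hTly, card_sadd] at h; exact h
  have hap' : IsAperiodic
      (({0, s1 - s0, s2 - s0} : Finset G) + ({0, t1 - t0, t2 - t0} : Finset G)) :=
    aperiodic_sadd (s0 + t0) (by rw [← hST]; exact hap)
  have hcard' : (({0, s1 - s0, s2 - s0} : Finset G)
      + ({0, t1 - t0, t2 - t0} : Finset G)).card + μ = 6 := by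
    rw [← card_sadd (s0 + t0)
      (({0, s1 - s0, s2 - s0} : Finset G) + ({0, t1 - t0, t2 - t0} : Finset G)), ← hST]
    exact hsum
  obtain ⟨r, a, hres⟩ := key μ hμ (s1 - s0) (s2 - s0) (t1 - t0) (t2 - t0)
    (fun h => hs01 (lin h (by abel)).symm) (fun h => hs02 (lin h (by abel)).symm)
    (fun h => hs12 (lin h (by abel)))
    (fun h => ht01 (lin h (by abel)).symm) (fun h => ht02 (lin h (by abel)).symm)
    (fun h => ht12 (lin h (by abel)))
    hS3' hT3' hap' hcard'
  rcases hres with (h | h) | h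
  · exact ⟨r, 0, Or.inl (Or.inl (by rw [hSly]; exact isAP_sadd s0 h))⟩
  · exact ⟨r, 0, Or.inl (Or.inr (by rw [hTly]; exact isAP_sadd t0 h))⟩
  · refine ⟨0, t0 + a - s0, Or.inr ?_⟩
    rw [hTly, h, hSly, ← add_assoc, ← add_assoc, Finset.singleton_add_singleton,
      Finset.singleton_add_singleton]
    congr 1
    exact congrArg (fun u => ({u} : Finset G)) (by abel)
end

section
/- Let G be an abelian group, let S be a finite generating subset of G with 0 ∈ S, and let k ≥ 1. Let A be a k-atom of S and let F be a k-fragment of S with |A ∩ F| ≥ k. Then A ⊆ F. In particular, A = F if F is a k-atom. -/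
open scoped Classical Pointwise

/-!
Since `0 ∈ S`, the boundary `|(X + S) \ X|` is submodular in `X`. The intersection `A ∩ F` is
admissible because it has at least `k` elements and lies inside `A`. The union `A ∪ F` is
admissible as well: this is clear in an infinite group, and in a finite one `-(G \ (F + S))` is a
`k`-fragment, so `|A| ≤ |G \ (F + S)|` leaves at least `k` elements outside `(A ∪ F) + S`.
Submodularity then makes `A ∩ F` a fragment, and minimality of the atom `A` forces `A ∩ F = A`.
-/

namespace AtomIntersection

lemma card_sdiff_inter_add_card_sdiff_union_le {α : Type*} {A F P Q : Finset α} (hAP : A ⊆ P)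
    (hFQ : F ⊆ Q) :
    ((P ∩ Q) \ (A ∩ F)).card + ((P ∪ Q) \ (A ∪ F)).card ≤ (P \ A).card + (Q \ F).card := by
  have h1 := Finset.card_sdiff_add_card_eq_card (Finset.inter_subset_inter hAP hFQ)
  have h2 := Finset.card_sdiff_add_card_eq_card (Finset.union_subset_union hAP hFQ)
  have h3 := Finset.card_sdiff_add_card_eq_card hAP
  have h4 := Finset.card_sdiff_add_card_eq_card hFQ
  have h5 := Finset.card_inter_add_card_union A F
  have h6 := Finset.card_inter_add_card_union P Q
  omega

variable {G : Type*} [AddCommGroup G] {S : Finset G} {k : ℕ}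

lemma kConn_le_card_sdiff {X : Finset G} (hX : GoodIn ⊤ S k X) :
    kConn S k ≤ ((X + S) \ X).card := by
  rw [kConn, kConnIn, if_pos ⟨X, hX⟩]
  exact Nat.sInf_le ⟨X, hX, rfl⟩

lemma isFragment_of_card_sdiff_le {X : Finset G} (hX : GoodIn ⊤ S k X)
    (hle : ((X + S) \ X).card ≤ kConn S k) : IsFragment S k X :=
  ⟨hX, le_antisymm hle (kConn_le_card_sdiff hX)⟩

lemma GoodIn.inter {A : Finset G} (hA : GoodIn ⊤ S k A) (F : Finset G)
    (hAF : k ≤ (A ∩ F).card) : GoodIn ⊤ S k (A ∩ F) := by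
  obtain ⟨-, -, Y, -, hY, hYA⟩ := hA
  exact ⟨by simp, hAF, Y, by simp, hY,
    hYA.mono_right (Finset.add_subset_add_right Finset.inter_subset_left)⟩

lemma card_boundary_inter_add_card_boundary_union_le (h0S : (0 : G) ∈ S) (A F : Finset G) :
    ((A ∩ F + S) \ (A ∩ F)).card + ((A ∪ F + S) \ (A ∪ F)).card ≤
      ((A + S) \ A).card + ((F + S) \ F).card := by
  have hinter : A ∩ F + S ⊆ (A + S) ∩ (F + S) :=
    Finset.subset_inter (Finset.add_subset_add_right Finset.inter_subset_left)
      (Finset.add_subset_add_right Finset.inter_subset_right)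
  calc ((A ∩ F + S) \ (A ∩ F)).card + ((A ∪ F + S) \ (A ∪ F)).card
      ≤ (((A + S) ∩ (F + S)) \ (A ∩ F)).card + (((A + S) ∪ (F + S)) \ (A ∪ F)).card := by
        rw [Finset.union_add]
        gcongr
    _ ≤ ((A + S) \ A).card + ((F + S) \ F).card :=
        card_sdiff_inter_add_card_sdiff_union_le (Finset.subset_add_left A h0S)
          (Finset.subset_add_left F h0S)

lemma isFragment_neg_compl_add [Fintype G] {F : Finset G} (hF : IsFragment S k F) :
    IsFragment S k (-(Finset.univ \ (F + S))) := by
  obtain ⟨⟨-, hFk, Y, -, hYk, hYF⟩, hFκ⟩ := hF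
  have mem_add_of_neg : ∀ {c x s : G}, -c + s = x → -x ∈ F → s ∈ S → c ∈ F + S := by
    intro c x s h hx hs
    have : c = -x + s := by rw [← h]; abel
    exact this ▸ Finset.add_mem_add hx hs
  have hgood : GoodIn ⊤ S k (-(Finset.univ \ (F + S))) := by
    refine ⟨by simp, ?_, -F, by simp, by rwa [Finset.card_neg], ?_⟩
    · rw [Finset.card_neg]
      exact hYk.trans (Finset.card_le_card fun y hy =>
        Finset.mem_sdiff.mpr ⟨Finset.mem_univ y, Finset.disjoint_left.mp hYF hy⟩)
    · rw [Finset.disjoint_left]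
      intro x hx hx'
      obtain ⟨f, hf, rfl⟩ := Finset.mem_neg.mp hx
      obtain ⟨_, hnc, s, hs, hcs⟩ := Finset.mem_add.mp hx'
      obtain ⟨c, hc, rfl⟩ := Finset.mem_neg.mp hnc
      exact (Finset.mem_sdiff.mp hc).2 (mem_add_of_neg hcs (by simpa using hf) hs)
  refine isFragment_of_card_sdiff_le hgood ?_
  have hsub : (-(Finset.univ \ (F + S)) + S) \ -(Finset.univ \ (F + S)) ⊆ -((F + S) \ F) := by
    intro x hx
    obtain ⟨hxS, hx⟩ := Finset.mem_sdiff.mp hx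
    obtain ⟨_, hnc, s, hs, hcs⟩ := Finset.mem_add.mp hxS
    obtain ⟨c, hc, rfl⟩ := Finset.mem_neg.mp hnc
    refine Finset.mem_neg.mpr ⟨-x, Finset.mem_sdiff.mpr ⟨?_, fun hxF => ?_⟩, neg_neg x⟩
    · by_contra h
      exact hx (Finset.mem_neg.mpr ⟨-x, by simpa using h, neg_neg x⟩)
    · exact (Finset.mem_sdiff.mp hc).2 (mem_add_of_neg hcs hxF hs)
  calc _ ≤ (-((F + S) \ F)).card := Finset.card_le_card hsub
    _ = kConn S k := by rw [Finset.card_neg]; exact hFκ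

lemma card_le_card_compl_add_of_isKAtom [Fintype G] {A F : Finset G} (hA : IsKAtom S k A)
    (hF : IsFragment S k F) : A.card ≤ (Finset.univ \ (F + S)).card := by
  simpa using hA.2 _ (isFragment_neg_compl_add hF)

lemma goodIn_union (h0S : (0 : G) ∈ S) {A F : Finset G} (hA : IsKAtom S k A)
    (hF : IsFragment S k F) (hAF : k ≤ (A ∩ F).card)
    (hU : ((A ∪ F + S) \ (A ∪ F)).card ≤ kConn S k) : GoodIn ⊤ S k (A ∪ F) := by
  refine ⟨by simp, hA.1.1.2.1.trans (Finset.card_le_card Finset.subset_union_left), ?_⟩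
  rcases finite_or_infinite G with _ | _
  · let := Fintype.ofFinite G
    refine ⟨Finset.univ \ (A ∪ F + S), by simp, ?_, Finset.sdiff_disjoint⟩
    have hA_le := card_le_card_compl_add_of_isKAtom hA hF
    have e1 := Finset.card_sdiff_add_card_eq_card (Finset.subset_add_left F h0S)
    have e2 := Finset.card_sdiff_add_card_eq_card (Finset.subset_univ (F + S))
    have e3 := Finset.card_sdiff_add_card_eq_card (Finset.subset_add_left (A ∪ F) h0S)
    have e4 := Finset.card_sdiff_add_card_eq_card (Finset.subset_univ (A ∪ F + S))
    have e5 := Finset.card_inter_add_card_union A F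
    have hFκ : ((F + S) \ F).card = kConn S k := hF.2
    omega
  · obtain ⟨Y, hY, hYk⟩ :=
      (Finset.finite_toSet (A ∪ F + S)).infinite_compl.exists_subset_card_eq k
    exact ⟨Y, by simp, hYk.ge, Finset.disjoint_left.mpr fun _ hx hx' => hY hx hx'⟩

end AtomIntersection

open AtomIntersection in
theorem atom_intersection_general {G : Type*} [AddCommGroup G]
    (S : Finset G) (h0S : (0 : G) ∈ S)
    (k : ℕ)
    (A F : Finset G) (hA : IsKAtom S k A) (hF : IsFragment S k F)
    (hAF : k ≤ (A ∩ F).card) :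
    A ⊆ F ∧ (IsKAtom S k F → A = F) := by
  have hAκ : ((A + S) \ A).card = kConn S k := hA.1.2
  have hFκ : ((F + S) \ F).card = kConn S k := hF.2
  have hI : GoodIn ⊤ S k (A ∩ F) := hA.1.1.inter F hAF
  have hsubmod := card_boundary_inter_add_card_boundary_union_le h0S A F
  have hIκ := kConn_le_card_sdiff hI
  have hU : GoodIn ⊤ S k (A ∪ F) := goodIn_union h0S hA hF hAF (by omega)
  have hUκ := kConn_le_card_sdiff hU
  have hIfrag : IsFragment S k (A ∩ F) := isFragment_of_card_sdiff_le hI (by omega)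
  have hIA : A ∩ F = A :=
    Finset.eq_of_subset_of_card_le Finset.inter_subset_left (hA.2 _ hIfrag)
  have hAF_sub : A ⊆ F := Finset.inter_eq_left.mp hIA
  exact ⟨hAF_sub, fun hFatom => Finset.eq_of_subset_of_card_le hAF_sub (hFatom.2 _ hA.1)⟩

/-- Theorem 2.9 (intersection theorem for atoms). -/
theorem atom_intersection {G : Type*} [AddCommGroup G]
    (S : Finset G) (h0S : (0 : G) ∈ S)
    (hgen : AddSubgroup.closure (S : Set G) = ⊤)
    (k : ℕ) (hk : 1 ≤ k)
    (A F : Finset G) (hA : IsKAtom S k A) (hF : IsFragment S k F)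
    (hAF : k ≤ (A ∩ F).card) :
    A ⊆ F ∧ (IsKAtom S k F → A = F) :=
  atom_intersection_general S h0S k A F hA hF hAF
end

section
/- Let G be an abelian group, let S be a finite subset of G with 0 ∈ S, and let k ≥ 1 be such that κ_3(S) = |S|. (a) Let F be a k-fragment of S with |F| ≥ k+1 and let a ∈ F+S be such that |(a−S) ∩ F| = 1, say (a−S) ∩ F = {b}; then F∖{b} is a k-fragment of S. (b) Let A be a k-atom of S with 0 ∈ A and |A| ≥ k+1, put S^∗ = S∖{0} and E = {(x,y) ∈ A×A : x−y ∈ S^∗}. Then: (1) for every x ∈ A+S, |(x−S) ∩ A| ≥ 2; (2) |A| ≤ |E| = Σ_{x∈A} |(x−S^∗) ∩ A| ≤ (|S|−1)|A| − 2κ_k(S); (3) there is a nonempty subset R ⊆ E such that Σ_{(x,y)∈R} (x−y) = 0. -/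
open scoped Classical Pointwise

/-!
If `b` is the only element of `F` with `a ∈ b + S`, deleting `b` takes `a` out of the boundary
`(F + S) \ F` and adds at most `b` to it, so `F \ {b}` is again a fragment. In an atom `A` this
would give a smaller fragment, so every `x ∈ A + S` has at least two `S`-neighbours in `A`. Double counting the
pairs of `A × S*` by their sums then bounds the number of edges of the digraph `E`, and since every
vertex of `E` has an out-neighbour, `E` contains a directed cycle, along which the differences
`x - y` telescope to `0`.
-/

section Colors

open Finset

variable {G : Type*} [AddCommGroup G]

theorem singleton_sub_inter_eq_filter (T A : Finset G) (x : G) :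
    ({x} - T) ∩ A = {y ∈ A | x - y ∈ T} := by
  ext y
  simp only [mem_inter, mem_filter, mem_sub, mem_singleton, exists_eq_left]
  constructor
  · rintro ⟨⟨t, ht, rfl⟩, hy⟩
    exact ⟨hy, by simpa using ht⟩
  · rintro ⟨hy, hxy⟩
    exact ⟨⟨x - y, hxy, sub_sub_cancel x y⟩, hy⟩

theorem singleton_sub_erase_zero_inter (S A : Finset G) (x : G) :
    ({x} - S.erase 0) ∩ A = (({x} - S) ∩ A).erase x := by
  ext y
  simp only [singleton_sub_inter_eq_filter, mem_filter, mem_erase, sub_ne_zero]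
  tauto

theorem card_filter_sub_mem_eq_sum (T A : Finset G) :
    #{p ∈ A ×ˢ A | p.1 - p.2 ∈ T} = ∑ x ∈ A, #(({x} - T) ∩ A) := by
  simp only [card_filter, sum_product, singleton_sub_inter_eq_filter]

/-- Double counting the pairs `(y, t) ∈ A × T` according to `y + t`. -/
theorem sum_card_singleton_sub_inter {T A U : Finset G} (hU : A + T ⊆ U) :
    ∑ x ∈ U, #(({x} - T) ∩ A) = #A * #T := by
  have hfiber : ∀ y ∈ A, #{x ∈ U | x - y ∈ T} = #T := fun y hy =>
    card_nbij' (· - y) (y + ·)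
      (fun x hx => (mem_filter.1 hx).2)
      (fun t ht => mem_filter.2 ⟨hU (add_mem_add hy ht), by simpa using ht⟩)
      (fun x _ => by simp) (fun t _ => by simp)
  calc ∑ x ∈ U, #(({x} - T) ∩ A) = ∑ y ∈ A, #{x ∈ U | x - y ∈ T} := by
        simp only [singleton_sub_inter_eq_filter, card_filter]
        exact sum_comm
    _ = #A * #T := by rw [sum_congr rfl hfiber, sum_const, smul_eq_mul]

theorem GoodIn.of_subset {L : AddSubgroup G} {S X X' : Finset G} {k : ℕ} (hX : GoodIn L S k X)
    (hsub : X' ⊆ X) (hk : k ≤ #X') : GoodIn L S k X' := by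
  obtain ⟨hXL, -, Y, hYL, hYk, hY⟩ := hX
  exact ⟨(coe_subset.2 hsub).trans hXL, hk, Y, hYL, hYk,
    hY.mono_right (add_subset_add_right hsub)⟩

theorem kConn_le_card_boundary {S X : Finset G} {k : ℕ} (hX : GoodIn ⊤ S k X) :
    kConn S k ≤ #((X + S) \ X) := by
  rw [kConn, kConnIn, if_pos ⟨X, hX⟩]
  exact Nat.sInf_le ⟨X, hX, rfl⟩

theorem isFragment_of_card_boundary_le {S X : Finset G} {k : ℕ} (hX : GoodIn ⊤ S k X)
    (h : #((X + S) \ X) ≤ kConn S k) : IsFragment S k X :=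
  ⟨hX, le_antisymm h (kConn_le_card_boundary hX)⟩

theorem card_boundary_erase_le {S F : Finset G} {a b : G} (h0S : (0 : G) ∈ S)
    (ha : a ∈ F + S) (hb : ({a} - S) ∩ F = {b}) :
    #((F.erase b + S) \ F.erase b) ≤ #((F + S) \ F) := by
  have hab : ∀ y ∈ F, a - y ∈ S → y = b := fun y hy hay => by
    have : y ∈ ({a} - S) ∩ F := by
      rw [singleton_sub_inter_eq_filter]; exact mem_filter.2 ⟨hy, hay⟩
    rwa [hb, mem_singleton] at this
  have ha_out : a ∉ F.erase b + S := fun h => by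
    obtain ⟨y, hy, s, hs, rfl⟩ := mem_add.1 h
    exact (mem_erase.1 hy).1 (hab y (mem_of_mem_erase hy) (by simpa using hs))
  have ha_in : a ∈ insert b ((F + S) \ F) := by
    by_cases haF : a ∈ F
    · exact mem_insert.2 (Or.inl (hab a haF (by simpa using h0S)))
    · exact mem_insert_of_mem (mem_sdiff.2 ⟨ha, haF⟩)
  have hsub : (F.erase b + S) \ F.erase b ⊆ (insert b ((F + S) \ F)).erase a := by
    intro x hx
    obtain ⟨hxS, hxF⟩ := mem_sdiff.1 hx
    refine mem_erase.2 ⟨fun hxa => ha_out (hxa ▸ hxS), ?_⟩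
    by_cases hxb : x = b
    · exact hxb ▸ mem_insert_self _ _
    · refine mem_insert_of_mem (mem_sdiff.2 ⟨add_subset_add_right (erase_subset b F) hxS, ?_⟩)
      exact fun hx' => hxF (mem_erase.2 ⟨hxb, hx'⟩)
  calc #((F.erase b + S) \ F.erase b) ≤ #(insert b ((F + S) \ F)) - 1 := by
        rw [← card_erase_of_mem ha_in]; exact card_le_card hsub
    _ ≤ #((F + S) \ F) := by have := card_insert_le b ((F + S) \ F); omega

theorem IsFragment.erase {S F : Finset G} {k : ℕ} {a b : G} (h0S : (0 : G) ∈ S)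
    (hF : IsFragment S k F) (hcard : k + 1 ≤ #F) (ha : a ∈ F + S)
    (hb : ({a} - S) ∩ F = {b}) : IsFragment S k (F.erase b) := by
  have hbF : b ∈ F := (mem_inter.1 (hb ▸ mem_singleton_self b : b ∈ ({a} - S) ∩ F)).2
  refine isFragment_of_card_boundary_le (hF.1.of_subset (erase_subset b F) ?_)
    ((card_boundary_erase_le h0S ha hb).trans hF.2.le)
  rw [card_erase_of_mem hbF]; omega

theorem IsKAtom.two_le_card_singleton_sub_inter {S A : Finset G} {k : ℕ} {x : G}
    (h0S : (0 : G) ∈ S) (hA : IsKAtom S k A) (hcard : k + 1 ≤ #A) (hx : x ∈ A + S) :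
    2 ≤ #(({x} - S) ∩ A) := by
  by_contra! hlt
  have hne : (({x} - S) ∩ A).Nonempty := by
    obtain ⟨y, hy, s, hs, rfl⟩ := mem_add.1 hx
    refine ⟨y, ?_⟩
    rw [singleton_sub_inter_eq_filter]
    exact mem_filter.2 ⟨hy, by simpa using hs⟩
  obtain ⟨b, hb⟩ := card_eq_one.1 (le_antisymm (by omega) hne.card_pos)
  have hbA : b ∈ A := (mem_inter.1 (hb ▸ mem_singleton_self b : b ∈ ({x} - S) ∩ A)).2
  have := hA.2 _ (hA.1.erase h0S hcard hx hb)
  rw [card_erase_of_mem hbA] at this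
  omega

theorem IsKAtom.one_le_card_singleton_sub_erase_zero_inter {S A : Finset G} {k : ℕ} {x : G}
    (h0S : (0 : G) ∈ S) (hA : IsKAtom S k A) (hcard : k + 1 ≤ #A) (hx : x ∈ A) :
    1 ≤ #(({x} - S.erase 0) ∩ A) := by
  have hxx : x ∈ ({x} - S) ∩ A := by simp [hx, h0S]
  rw [singleton_sub_erase_zero_inter, card_erase_of_mem hxx]
  have := hA.two_le_card_singleton_sub_inter h0S hcard (subset_add_left A h0S hx)
  omega

theorem IsKAtom.two_le_card_singleton_sub_erase_zero_inter {S A : Finset G} {k : ℕ} {x : G}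
    (h0S : (0 : G) ∈ S) (hA : IsKAtom S k A) (hcard : k + 1 ≤ #A) (hx : x ∈ (A + S) \ A) :
    2 ≤ #(({x} - S.erase 0) ∩ A) := by
  obtain ⟨hxS, hxA⟩ := mem_sdiff.1 hx
  rw [singleton_sub_erase_zero_inter, erase_eq_of_notMem fun h => hxA (mem_inter.1 h).2]
  exact hA.two_le_card_singleton_sub_inter h0S hcard hxS

/-- Double counting `A × S*` by sums, each of the `κ_k(S)` boundary points being hit twice. -/
theorem IsKAtom.card_filter_sub_mem_erase_zero_add_le {S A : Finset G} {k : ℕ}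
    (h0S : (0 : G) ∈ S) (hA : IsKAtom S k A) (hcard : k + 1 ≤ #A) :
    #{p ∈ A ×ˢ A | p.1 - p.2 ∈ S.erase 0} + 2 * kConn S k ≤ (#S - 1) * #A := by
  have hsplit : A + S = A ∪ (A + S) \ A := (union_sdiff_of_subset (subset_add_left A h0S)).symm
  calc #{p ∈ A ×ˢ A | p.1 - p.2 ∈ S.erase 0} + 2 * kConn S k
      = ∑ x ∈ A, #(({x} - S.erase 0) ∩ A) + ∑ _x ∈ (A + S) \ A, 2 := by
        rw [card_filter_sub_mem_eq_sum, sum_const, smul_eq_mul, hA.1.2, mul_comm]; rfl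
    _ ≤ ∑ x ∈ A, #(({x} - S.erase 0) ∩ A) +
          ∑ x ∈ (A + S) \ A, #(({x} - S.erase 0) ∩ A) := by
        gcongr with x hx
        exact hA.two_le_card_singleton_sub_erase_zero_inter h0S hcard hx
    _ = ∑ x ∈ A + S, #(({x} - S.erase 0) ∩ A) := by
        rw [← sum_union disjoint_sdiff, ← hsplit]
    _ = (#S - 1) * #A := by
        rw [sum_card_singleton_sub_inter (add_subset_add_left (erase_subset 0 S)),
          card_erase_of_mem h0S, mul_comm]

end Colors

section Cycles

open Finset Function

theorem Set.MapsTo.exists_mem_periodicPts {α : Type*} {A : Set α} {f : α → α} (hA : A.Finite)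
    (hf : Set.MapsTo f A A) {x : α} (hx : x ∈ A) : ∃ y ∈ A, y ∈ periodicPts f := by
  have : Finite A := hA
  obtain ⟨m, n, hmn, heq⟩ := Finite.exists_ne_map_eq_of_infinite
    fun n : ℕ => (⟨f^[n] x, hf.iterate n hx⟩ : A)
  replace heq : f^[m] x = f^[n] x := congrArg Subtype.val heq
  wlog hlt : m < n generalizing m n
  · exact this n m hmn.symm heq.symm (by omega)
  refine ⟨f^[m] x, hf.iterate m hx, mk_mem_periodicPts (Nat.sub_pos_of_lt hlt) ?_⟩
  rw [IsPeriodicPt, IsFixedPt, ← iterate_add_apply, Nat.sub_add_cancel hlt.le, heq]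

variable {G : Type*} [AddCommGroup G]

/-- The steps `(x, f x)` along a periodic orbit of `f` have telescoping sum zero. -/
theorem exists_subset_image_graph_sum_sub_eq_zero {A : Finset G} {f : G → G}
    (hf : Set.MapsTo f A A) (hA : A.Nonempty) :
    ∃ R ⊆ A.image (fun x => (x, f x)), R.Nonempty ∧ ∑ p ∈ R, (p.1 - p.2) = 0 := by
  obtain ⟨y, hyA, hy⟩ := hf.exists_mem_periodicPts A.finite_toSet hA.choose_spec
  set n := minimalPeriod f y
  have hn : 0 < n := minimalPeriod_pos_of_mem_periodicPts hy
  have hinj : Set.InjOn (fun i => (f^[i] y, f^[i + 1] y)) (range n) := fun i hi j hj hij =>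
    iterate_injOn_Iio_minimalPeriod (by simpa using hi) (by simpa using hj) (congrArg Prod.fst hij)
  refine ⟨(range n).image fun i => (f^[i] y, f^[i + 1] y), ?_,
    (nonempty_range_iff.2 hn.ne').image _, ?_⟩
  · intro p hp
    obtain ⟨i, -, rfl⟩ := mem_image.1 hp
    exact mem_image.2 ⟨f^[i] y, hf.iterate i hyA, by rw [iterate_succ_apply']⟩
  · rw [sum_image hinj, sum_range_sub', iterate_zero_apply, iterate_minimalPeriod, sub_self]

theorem exists_subset_filter_sub_mem_sum_sub_eq_zero {A T : Finset G} (hA : A.Nonempty)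
    (h : ∀ x ∈ A, ∃ y ∈ A, x - y ∈ T) :
    ∃ R ⊆ {p ∈ A ×ˢ A | p.1 - p.2 ∈ T}, R.Nonempty ∧ ∑ p ∈ R, (p.1 - p.2) = 0 := by
  choose! f hfA hfT using h
  obtain ⟨R, hR, hne, hsum⟩ := exists_subset_image_graph_sum_sub_eq_zero hfA hA
  refine ⟨R, fun p hp => ?_, hne, hsum⟩
  obtain ⟨x, hx, rfl⟩ := mem_image.1 (hR hp)
  exact mem_filter.2 ⟨mem_product.2 ⟨hx, hfA x hx⟩, hfT x hx⟩

end Cycles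

theorem colors_lemma_general {G : Type*} [AddCommGroup G]
    (S : Finset G) (h0S : (0 : G) ∈ S)
    (k : ℕ) :
    (∀ F : Finset G, IsFragment S k F → k + 1 ≤ F.card →
      ∀ a ∈ F + S, ∀ b : G, ({a} - S) ∩ F = {b} → IsFragment S k (F.erase b)) ∧
    (∀ A : Finset G, IsKAtom S k A → (0 : G) ∈ A → k + 1 ≤ A.card →
      (∀ x ∈ A + S, 2 ≤ (({x} - S) ∩ A).card) ∧
      (A.card ≤ ((A ×ˢ A).filter fun p => p.1 - p.2 ∈ S.erase 0).card ∧
        ((A ×ˢ A).filter fun p => p.1 - p.2 ∈ S.erase 0).card =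
          ∑ x ∈ A, (({x} - S.erase 0) ∩ A).card ∧
        ((A ×ˢ A).filter fun p => p.1 - p.2 ∈ S.erase 0).card + 2 * kConn S k ≤
          (S.card - 1) * A.card) ∧
      (∃ R ⊆ (A ×ˢ A).filter fun p => p.1 - p.2 ∈ S.erase 0,
        R.Nonempty ∧ ∑ p ∈ R, (p.1 - p.2) = 0)) := by
  refine ⟨fun F hF hcard a ha b hb => hF.erase h0S hcard ha hb, fun A hA h0A hcard => ?_⟩
  have hout : ∀ x ∈ A, 1 ≤ (({x} - S.erase 0) ∩ A).card := fun x hx =>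
    hA.one_le_card_singleton_sub_erase_zero_inter h0S hcard hx
  refine ⟨fun x hx => hA.two_le_card_singleton_sub_inter h0S hcard hx, ⟨?_,
    card_filter_sub_mem_eq_sum _ _, hA.card_filter_sub_mem_erase_zero_add_le h0S hcard⟩, ?_⟩
  · rw [card_filter_sub_mem_eq_sum, Finset.card_eq_sum_ones]
    exact Finset.sum_le_sum hout
  · refine exists_subset_filter_sub_mem_sum_sub_eq_zero ⟨0, h0A⟩ fun x hx => ?_
    obtain ⟨y, hy⟩ := Finset.card_pos.1 (hout x hx)
    rw [singleton_sub_inter_eq_filter, Finset.mem_filter] at hy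
    exact ⟨y, hy⟩

/-- Lemma 5.2 (colors in atoms). -/
theorem colors_lemma {G : Type*} [AddCommGroup G]
    (S : Finset G) (h0S : (0 : G) ∈ S)
    (k : ℕ) (hk : 1 ≤ k)
    (hκ3 : kConn S 3 = S.card) :
    (∀ F : Finset G, IsFragment S k F → k + 1 ≤ F.card →
      ∀ a ∈ F + S, ∀ b : G, ({a} - S) ∩ F = {b} → IsFragment S k (F.erase b)) ∧
    (∀ A : Finset G, IsKAtom S k A → (0 : G) ∈ A → k + 1 ≤ A.card →
      (∀ x ∈ A + S, 2 ≤ (({x} - S) ∩ A).card) ∧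
      (A.card ≤ ((A ×ˢ A).filter fun p => p.1 - p.2 ∈ S.erase 0).card ∧
        ((A ×ˢ A).filter fun p => p.1 - p.2 ∈ S.erase 0).card =
          ∑ x ∈ A, (({x} - S.erase 0) ∩ A).card ∧
        ((A ×ˢ A).filter fun p => p.1 - p.2 ∈ S.erase 0).card + 2 * kConn S k ≤
          (S.card - 1) * A.card) ∧
      (∃ R ⊆ (A ×ˢ A).filter fun p => p.1 - p.2 ∈ S.erase 0,
        R.Nonempty ∧ ∑ p ∈ R, (p.1 - p.2) = 0)) :=
  colors_lemma_general S h0S k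
end
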